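/- arXiv:2602.11343 — 3 statements merged into one kernel-verified Lean document; each statement's English description precedes it below -/
import Mathlib

section
/- Let α be a q-Weil number of weight n, let d be the degree of the minimal polynomial of α over ℚ, and let c₀ be its constant coefficient. Then |c₀| = q^(n·d/2) (i.e. |c₀| = (Real.sqrt q)^(n·d)), and consequently the integer f·n·d is even, so that q^(n·d/2) is an integer power of p. -/
/-!
Over `ℂ` the minimal polynomial `μ` of `α` splits, so `μ(0) = ± ∏ β` over its `d` roots, each of
absolute value `√q ^ n`; hence `|μ(0)| = √q ^ (n d) = √p ^ (f n d)`. The left side is rational while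
`√p` is irrational, which forces `f n d` to be even.
-/

/-- `α : ℂ` is a `q`-Weil number of weight `n` (where `q = p ^ f`):
(1) `α` is algebraic over `ℚ`;
(2) every complex root of the minimal polynomial of `α` over `ℚ` has absolute value
    `q ^ (n/2) = (Real.sqrt q) ^ n`;
(3) `p ^ m * α` is an algebraic integer for some `m ≥ 0`. -/
def IsWeilNumber (p f : ℕ) (n : ℤ) (α : ℂ) : Prop :=
  IsAlgebraic ℚ α ∧
  (∀ β : ℂ, Polynomial.aeval β (minpoly ℚ α) = 0 →
    ‖β‖ = Real.sqrt ((p : ℝ) ^ f) ^ n) ∧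
  ∃ m : ℕ, IsIntegral ℤ ((p : ℂ) ^ m * α)

open Polynomial

theorem Polynomial.Monic.norm_coeff_zero_of_forall_norm_root {K : Type*} [NormedField K]
    [IsAlgClosed K] {P : K[X]} (hP : P.Monic) {r : ℝ} (hr : ∀ β ∈ P.roots, ‖β‖ = r) :
    ‖P.coeff 0‖ = r ^ P.natDegree := by
  have hsplit : P.Splits := IsAlgClosed.splits P
  have hnorms : P.roots.map (‖·‖) = Multiset.replicate P.natDegree r := by
    rw [Multiset.eq_replicate, Multiset.card_map, hsplit.natDegree_eq_card_roots]
    exact ⟨rfl, Multiset.forall_mem_map_iff.mpr hr⟩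
  have hprod : ‖P.roots.prod‖ = (P.roots.map (‖·‖)).prod := map_multiset_prod (normHom (α := K)) _
  rw [hsplit.coeff_zero_eq_prod_roots_of_monic hP, norm_mul, norm_pow, norm_neg, norm_one, one_pow,
    one_mul, hprod, hnorms, Multiset.prod_replicate]

theorem Polynomial.Monic.abs_coeff_zero_of_forall_norm_aeval_eq_zero {P : ℚ[X]} (hP : P.Monic)
    {r : ℝ} (hr : ∀ β : ℂ, aeval β P = 0 → ‖β‖ = r) :
    |(P.coeff 0 : ℝ)| = r ^ P.natDegree := by
  have hPC : (P.map (algebraMap ℚ ℂ)).Monic := hP.map _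
  rw [← natDegree_map_eq_of_injective (algebraMap ℚ ℂ).injective,
    ← hPC.norm_coeff_zero_of_forall_norm_root, coeff_map]
  · simp
  · intro β hβ
    exact hr β (by simpa [aeval_def, eval_map] using isRoot_of_mem_roots hβ)

theorem Real.sqrt_pow_zpow {x : ℝ} (hx : 0 ≤ x) (f : ℕ) (m : ℤ) :
    √(x ^ f) ^ m = √x ^ (f * m) := by
  have hsqrt : √(x ^ f) = √x ^ f := by
    rw [Real.sqrt_eq_iff_eq_sq (by positivity) (by positivity), ← pow_mul, mul_comm, pow_mul,
      Real.sq_sqrt hx]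
  rw [hsqrt, ← zpow_natCast, ← zpow_mul]

theorem Real.sqrt_zpow_two_mul {x : ℝ} (hx : 0 ≤ x) (k : ℤ) : √x ^ (2 * k) = x ^ k := by
  rw [zpow_mul, zpow_two, Real.mul_self_sqrt hx]

theorem Nat.Prime.even_of_sqrt_zpow_eq_ratCast {p : ℕ} (hp : p.Prime) {m : ℤ} {x : ℚ}
    (h : √p ^ m = x) : Even m := by
  by_contra hodd
  obtain ⟨k, rfl⟩ := Int.not_even_iff_odd.mp hodd
  refine hp.irrational_sqrt ⟨x / (p : ℚ) ^ k, ?_⟩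
  have hp0 : (0 : ℝ) < p := by exact_mod_cast hp.pos
  rw [Rat.cast_div, ← h, zpow_add₀ (Real.sqrt_pos.mpr hp0).ne', Real.sqrt_zpow_two_mul hp0.le]
  push_cast
  field_simp

theorem weilNumber_constantCoeff_general (p f : ℕ) (hp : p.Prime) (n : ℤ) (α : ℂ)
    (h : IsWeilNumber p f n α) :
    |(((minpoly ℚ α).coeff 0 : ℚ) : ℝ)| =
        Real.sqrt ((p : ℝ) ^ f) ^ (n * ((minpoly ℚ α).natDegree : ℤ)) ∧
      Even ((f : ℤ) * n * ((minpoly ℚ α).natDegree : ℤ)) ∧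
      ∃ k : ℤ, Real.sqrt ((p : ℝ) ^ f) ^ (n * ((minpoly ℚ α).natDegree : ℤ)) = (p : ℝ) ^ k := by
  obtain ⟨halg, hroots, -⟩ := h
  set d := (minpoly ℚ α).natDegree
  have habs : |((minpoly ℚ α).coeff 0 : ℝ)| = √((p : ℝ) ^ f) ^ (n * (d : ℤ)) := by
    rw [(minpoly.monic halg.isIntegral).abs_coeff_zero_of_forall_norm_aeval_eq_zero hroots,
      ← zpow_natCast, ← zpow_mul]
  have hsqrt : √((p : ℝ) ^ f) ^ (n * (d : ℤ)) = √p ^ ((f : ℤ) * n * d) := by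
    rw [Real.sqrt_pow_zpow (Nat.cast_nonneg p), mul_assoc]
  have heven : Even ((f : ℤ) * n * d) :=
    hp.even_of_sqrt_zpow_eq_ratCast (x := |(minpoly ℚ α).coeff 0|) (by push_cast; rw [habs, hsqrt])
  obtain ⟨k, hk⟩ := heven
  refine ⟨habs, ⟨k, hk⟩, k, ?_⟩
  rw [hsqrt, hk, ← two_mul, Real.sqrt_zpow_two_mul (Nat.cast_nonneg p)]

/-- If `α` is a `q`-Weil number of weight `n`, `d` the degree of its minimal polynomial over `ℚ`
and `c₀` its constant coefficient, then `|c₀| = q ^ (n * d / 2) = (Real.sqrt q) ^ (n * d)`;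
consequently `f * n * d` is even, and `q ^ (n * d / 2)` is an integer power of `p`. -/
theorem weilNumber_constantCoeff (p f : ℕ) (hp : p.Prime) (hf : 1 ≤ f) (n : ℤ) (α : ℂ)
    (h : IsWeilNumber p f n α) :
    |(((minpoly ℚ α).coeff 0 : ℚ) : ℝ)| =
        Real.sqrt ((p : ℝ) ^ f) ^ (n * ((minpoly ℚ α).natDegree : ℤ)) ∧
      Even ((f : ℤ) * n * ((minpoly ℚ α).natDegree : ℤ)) ∧
      ∃ k : ℤ, Real.sqrt ((p : ℝ) ^ f) ^ (n * ((minpoly ℚ α).natDegree : ℤ)) = (p : ℝ) ^ k :=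
  weilNumber_constantCoeff_general p f hp n α h
end

section
/- Let M' and M be finitely generated free abelian groups, f : M' → M a surjective group homomorphism, φ' : M' → M' a group automorphism of finite order (φ'^k = id for some k ≥ 1), and φ : M → M a group homomorphism satisfying f ∘ φ' = φ ∘ f. Then the cokernel of the induced map on fixed points, Fix(φ') → Fix(φ) (where Fix(φ') = {x ∈ M' : φ'(x) = x} and Fix(φ) = {y ∈ M : φ(y) = y}, and the map is the restriction of f), is a finite abelian group; that is, the quotient Fix(φ) / f(Fix(φ')) is finite. -/
/-- The fixed-point subgroup `{a : A | ψ a = a}` of an endomorphism `ψ` of an abelian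
group `A`. -/
def fixedSubgroup {A : Type*} [AddCommGroup A] (ψ : A →+ A) : AddSubgroup A where
  carrier := {a | ψ a = a}
  zero_mem' := by simp
  add_mem' := by
    intro a b ha hb
    simp only [Set.mem_setOf_eq, map_add] at *
    rw [ha, hb]
  neg_mem' := by
    intro a ha
    simp only [Set.mem_setOf_eq, map_neg] at *
    rw [ha]

/-!
If `y = f x` is fixed by `φ` and `φ'^k = 1`, then the orbit sum `N x = ∑_{i<k} φ'^i x` is
fixed by `φ'` and `f (N x) = k • y`. So `Fix(φ) / f(Fix(φ'))` is killed by `k`; being a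
finitely generated abelian group, it is finite.
-/

theorem AddSubgroup.fg_of_moduleFinite_int {M : Type*} [AddCommGroup M] [Module.Finite ℤ M]
    (H : AddSubgroup M) : AddGroup.FG H :=
  Module.Finite.iff_addGroup_fg.mp
    (Module.Finite.of_injective H.subtype.toIntLinearMap Subtype.val_injective)

theorem QuotientAddGroup.finite_of_nsmul_mem {G : Type*} [AddCommGroup G] [AddGroup.FG G]
    (H : AddSubgroup G) {k : ℕ} (hk : 0 < k) (hkH : ∀ g : G, k • g ∈ H) : Finite (G ⧸ H) := by
  refine AddCommGroup.finite_of_fg_isAddTorsion _ fun q => ?_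
  refine isOfFinAddOrder_iff_nsmul_eq_zero.mpr ⟨k, hk, ?_⟩
  induction q using QuotientAddGroup.induction_on with
  | H g => rw [← QuotientAddGroup.mk_nsmul, QuotientAddGroup.eq_zero_iff]; exact hkH g

section OrbitSum

variable {A B : Type*} [AddCommGroup A] [AddCommGroup B]

theorem map_sum_range_iterate_eq_nsmul (f : A →+ B) {ψ' : A → A} {ψ : B → B}
    (hcomm : Function.Semiconj f ψ' ψ) {x : A} (hx : ψ (f x) = f x) (k : ℕ) :
    f (∑ i ∈ Finset.range k, ψ'^[i] x) = k • f x := by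
  have hterm (i : ℕ) : f (ψ'^[i] x) = f x :=
    (hcomm.iterate_right i x).trans (Function.IsFixedPt.iterate hx i)
  simp only [map_sum, hterm, Finset.sum_const, Finset.card_range]

theorem sum_range_iterate_mem_fixedSubgroup (ψ : A →+ A) {k : ℕ} {x : A}
    (hx : (⇑ψ)^[k] x = x) : ∑ i ∈ Finset.range k, (⇑ψ)^[i] x ∈ fixedSubgroup ψ := by
  show ψ (∑ i ∈ Finset.range k, (⇑ψ)^[i] x) = _
  have hshift := Finset.sum_range_succ' (fun i => (⇑ψ)^[i] x) k
  rw [Finset.sum_range_succ, hx] at hshift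
  simp only [Function.iterate_succ_apply', Function.iterate_zero_apply] at hshift
  rw [map_sum]
  exact add_right_cancel hshift.symm

theorem nsmul_mem_map_fixedSubgroup (f : A →+ B) (hf : Function.Surjective f)
    {ψ' : A →+ A} {ψ : B →+ B} (hcomm : Function.Semiconj f ψ' ψ) {k : ℕ}
    (hord : ∀ x : A, (⇑ψ')^[k] x = x) {y : B} (hy : y ∈ fixedSubgroup ψ) :
    k • y ∈ (fixedSubgroup ψ').map f := by
  obtain ⟨x, rfl⟩ := hf y
  exact ⟨_, sum_range_iterate_mem_fixedSubgroup ψ' (hord x),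
    map_sum_range_iterate_eq_nsmul f hcomm hy k⟩

end OrbitSum

theorem coker_fixedPoints_finite_general {M' M : Type*} [AddCommGroup M'] [AddCommGroup M]
    [Module.Finite ℤ M]
    (f : M' →+ M) (hf : Function.Surjective f)
    (φ' : M' →+ M')
    (k : ℕ) (hk : 1 ≤ k) (hord : ∀ x : M', (⇑φ')^[k] x = x)
    (φ : M →+ M) (hcomm : ∀ x : M', f (φ' x) = φ (f x)) :
    Finite
      (fixedSubgroup φ ⧸ ((fixedSubgroup φ').map f).addSubgroupOf (fixedSubgroup φ)) := by
  have := (fixedSubgroup φ).fg_of_moduleFinite_int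
  exact QuotientAddGroup.finite_of_nsmul_mem _ hk fun y =>
    nsmul_mem_map_fixedSubgroup f hf hcomm hord y.2

/-- Let `M'`, `M` be finitely generated free abelian groups, `f : M' → M` a surjective
homomorphism, `φ'` an automorphism of `M'` of finite order and `φ : M → M` a homomorphism
with `f ∘ φ' = φ ∘ f`.  Then the cokernel of the induced map on fixed points
`Fix(φ') → Fix(φ)` is finite, i.e. `Fix(φ) / f(Fix(φ'))` is a finite group. -/
theorem coker_fixedPoints_finite {M' M : Type*} [AddCommGroup M'] [AddCommGroup M]
    [Module.Free ℤ M'] [Module.Finite ℤ M'] [Module.Free ℤ M] [Module.Finite ℤ M]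
    (f : M' →+ M) (hf : Function.Surjective f)
    (φ' : M' →+ M') (hbij : Function.Bijective φ')
    (k : ℕ) (hk : 1 ≤ k) (hord : ∀ x : M', (⇑φ')^[k] x = x)
    (φ : M →+ M) (hcomm : ∀ x : M', f (φ' x) = φ (f x)) :
    Finite
      (fixedSubgroup φ ⧸ ((fixedSubgroup φ').map f).addSubgroupOf (fixedSubgroup φ)) :=
  coker_fixedPoints_finite_general f hf φ' k hk hord φ hcomm
end

section
/- Let k be an infinite field, Λ a free abelian group of finite rank (written additively), and φ : Λ → Λ a group homomorphism. For every group homomorphism t : Λ → kˣ (from the additive group Λ to the multiplicative group of nonzero elements of k), let ρ_t denote the k-linear endomorphism of the group algebra k[Λ] (AddMonoidAlgebra k Λ) determined on basis elements by ρ_t(single λ c) = (t(λ) · t(φ(λ))⁻¹) • single λ c. Then an element x ∈ k[Λ] satisfies ρ_t(x) = x for all group homomorphisms t : Λ → kˣ if and only if x lies in the k-linear span of the basis elements single λ 1 with φ(λ) = λ. Equivalently, the subspace of elements invariant under all ρ_t equals the image of the group algebra k[Fix(φ)] of the fixed subgroup Fix(φ) = {λ ∈ Λ : φ(λ) = λ}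 inside k[Λ]. -/
/-!
Each `ρ t` acts diagonally on the basis `single l 1`, by the scalar `t (l - φ l)`, so `x` is
invariant under all `ρ t` iff `t (l - φ l) = 1` for every `t` and every `l` in the support of
`x`. Characters of a free abelian group into `kˣ` separate points: a nonzero `μ` has a nonzero
coordinate `n`, and since `k` is infinite some `u : kˣ` has `u ^ n ≠ 1`. Hence the support of an
invariant `x` lies in `Fix(φ)`.
-/

open AddMonoidAlgebra

lemma exists_units_zpow_ne_one {k : Type*} [Field k] [Infinite k] {n : ℤ} (hn : n ≠ 0) :
    ∃ u : kˣ, u ^ n ≠ 1 := by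
  classical
  have hpos : 0 < n.natAbs := Int.natAbs_pos.mpr hn
  obtain ⟨a, ha⟩ :=
    Infinite.exists_notMem_finset (insert 0 (Polynomial.nthRoots n.natAbs (1 : k)).toFinset)
  simp only [Finset.mem_insert, Multiset.mem_toFinset, Polynomial.mem_nthRoots hpos,
    not_or] at ha
  refine ⟨Units.mk0 a ha.1, fun hu => ha.2 ?_⟩
  rw [← pow_natAbs_eq_one, Units.ext_iff] at hu
  simpa using hu

lemma Module.Free.exists_addMonoidHom_apply_ne_zero {Λ A : Type*} [AddCommGroup Λ]
    [Module.Free ℤ Λ] [AddCommGroup A] (hA : ∀ n : ℤ, n ≠ 0 → ∃ a : A, n • a ≠ 0) {μ : Λ}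
    (hμ : μ ≠ 0) : ∃ t : Λ →+ A, t μ ≠ 0 := by
  let b := Module.Free.chooseBasis ℤ Λ
  obtain ⟨i, hi⟩ : ∃ i, b.repr μ i ≠ 0 :=
    Finsupp.ne_iff.mp ((LinearEquiv.map_ne_zero_iff b.repr).mpr hμ)
  obtain ⟨a, ha⟩ := hA _ hi
  exact ⟨((b.coord i).smulRight a).toAddMonoidHom, by simpa using ha⟩

namespace AddMonoidAlgebra

variable {k Λ : Type*} [CommSemiring k] {f : AddMonoidAlgebra k Λ →ₗ[k] AddMonoidAlgebra k Λ}
  {a : Λ → k}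

lemma coeff_apply_of_apply_single (hf : ∀ l c, f (single l c) = a l • single l c)
    (x : AddMonoidAlgebra k Λ) (l : Λ) : (f x).coeff l = a l * x.coeff l := by
  classical
  induction x using AddMonoidAlgebra.induction_linear with
  | zero => simp
  | add x y hx hy => simp [hx, hy, mul_add]
  | single m c =>
    rw [hf, coeff_smul, Finsupp.smul_apply, smul_eq_mul, coeff_single, Finsupp.single_apply]
    split_ifs with h
    · rw [h]
    · simp

lemma apply_eq_self_iff_of_apply_single [IsDomain k]
    (hf : ∀ l c, f (single l c) = a l • single l c) (x : AddMonoidAlgebra k Λ) :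
    f x = x ↔ ∀ l, x.coeff l ≠ 0 → a l = 1 := by
  rw [← coeff_inj, Finsupp.ext_iff]
  refine forall_congr' fun l => ?_
  rw [coeff_apply_of_apply_single hf]
  by_cases hl : x.coeff l = 0
  · simp [hl]
  · simp [hl, mul_eq_right₀ hl]

end AddMonoidAlgebra

lemma Module.Free.forall_units_twist_eq_one_iff {k Λ : Type*} [Field k] [Infinite k]
    [AddCommGroup Λ] [Module.Free ℤ Λ] (φ : Λ →+ Λ) (l : Λ) :
    (∀ t : Λ →+ Additive kˣ,
      ((Additive.toMul (t l) * (Additive.toMul (t (φ l)))⁻¹ : kˣ) : k) = 1) ↔ φ l = l := by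
  have htwist : ∀ t : Λ →+ Additive kˣ,
      Additive.toMul (t l) * (Additive.toMul (t (φ l)))⁻¹ = Additive.toMul (t (l - φ l)) := by
    intro t
    rw [map_sub, toMul_sub, div_eq_mul_inv]
  simp only [htwist, Units.val_eq_one, toMul_eq_one]
  refine ⟨fun h => ?_, fun h t => by rw [h, sub_self, map_zero]⟩
  by_contra hne
  have hunbounded : ∀ n : ℤ, n ≠ 0 → ∃ u : Additive kˣ, n • u ≠ 0 := fun n hn =>
    let ⟨u, hu⟩ := exists_units_zpow_ne_one (k := k) hn
    ⟨Additive.ofMul u, by rwa [← ofMul_zpow, Ne, ofMul_eq_zero]⟩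
  obtain ⟨t, ht⟩ := Module.Free.exists_addMonoidHom_apply_ne_zero hunbounded
    (sub_ne_zero.mpr (Ne.symm hne))
  exact ht (h t)

theorem twistedInvariants_eq_span_fixed_general {k Λ : Type*} [Field k] [Infinite k]
    [AddCommGroup Λ] [Module.Free ℤ Λ] (φ : Λ →+ Λ)
    (ρ : (Λ →+ Additive kˣ) → (AddMonoidAlgebra k Λ →ₗ[k] AddMonoidAlgebra k Λ))
    (hρ : ∀ (t : Λ →+ Additive kˣ) (l : Λ) (c : k),
      ρ t (AddMonoidAlgebra.single l c) =
        (((Additive.toMul (t l) * (Additive.toMul (t (φ l)))⁻¹ : kˣ) : k)) •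
          AddMonoidAlgebra.single l c)
    (x : AddMonoidAlgebra k Λ) :
    (∀ t : Λ →+ Additive kˣ, ρ t x = x) ↔
      x ∈ Submodule.span k
        {y : AddMonoidAlgebra k Λ | ∃ l : Λ, φ l = l ∧ y = AddMonoidAlgebra.single l (1 : k)} := by
  have hset : {y : AddMonoidAlgebra k Λ | ∃ l : Λ, φ l = l ∧ y = single l (1 : k)} =
      (fun l => single l (1 : k)) '' {l | φ l = l} := by
    ext y
    simp [eq_comm]
  rw [hset, ← supported_eq_span_single, mem_supported']
  simp only [fun t => apply_eq_self_iff_of_apply_single (hρ t)]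
  rw [forall_comm]
  simp only [← imp_forall_iff, Module.Free.forall_units_twist_eq_one_iff]
  exact forall_congr' fun l => not_imp_comm

/-- Twisted-conjugation invariants in the group algebra of a torus: let `k` be an infinite
field, `Λ` a finitely generated free abelian group and `φ : Λ → Λ` a homomorphism.  For
each group homomorphism `t : Λ → kˣ` let `ρ t` be the `k`-linear endomorphism of the group
algebra `k[Λ]` determined on basis elements by
`ρ t (single l c) = (t l * (t (φ l))⁻¹) • single l c`.  Then `x ∈ k[Λ]` is invariant under
all `ρ t` iff `x` lies in the `k`-span of the basis elements `single l 1` with `φ l = l`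
(i.e. the image of the group algebra of `Fix(φ)`). -/
theorem twistedInvariants_eq_span_fixed {k Λ : Type*} [Field k] [Infinite k]
    [AddCommGroup Λ] [Module.Free ℤ Λ] [Module.Finite ℤ Λ] (φ : Λ →+ Λ)
    (ρ : (Λ →+ Additive kˣ) → (AddMonoidAlgebra k Λ →ₗ[k] AddMonoidAlgebra k Λ))
    (hρ : ∀ (t : Λ →+ Additive kˣ) (l : Λ) (c : k),
      ρ t (AddMonoidAlgebra.single l c) =
        (((Additive.toMul (t l) * (Additive.toMul (t (φ l)))⁻¹ : kˣ) : k)) •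
          AddMonoidAlgebra.single l c)
    (x : AddMonoidAlgebra k Λ) :
    (∀ t : Λ →+ Additive kˣ, ρ t x = x) ↔
      x ∈ Submodule.span k
        {y : AddMonoidAlgebra k Λ | ∃ l : Λ, φ l = l ∧ y = AddMonoidAlgebra.single l (1 : k)} :=
  twistedInvariants_eq_span_fixed_general φ ρ hρ x
end
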